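/- Let G be a simple graph. If the s-th power I(G)^s of the edge ideal has a linear resolution for some s ≥ 1, then G is gap-free, i.e., the complement of G contains no induced 4-cycle. -/

import Mathlib

open Finsupp

namespace EP

variable (K : Type) [Field K]

/-! ## Simplicial chains over a linearly ordered vertex set -/

variable {V : Type} [Fintype V] [DecidableEq V] [LinearOrder V]

/-- Boundary of a single (oriented) face, given as a finset. -/
noncomputable def bdFace (s : Finset V) : Finset V →₀ K :=
  ∑ v ∈ s, ((-1 : K) ^ ((s.filter (fun w => w < v)).card)) • Finsupp.single (s.erase v) 1

/-- The simplicial boundary map on the free module on all finsets of vertices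
(the augmented oriented chain complex, with the empty set playing the role of
the `(-1)`-dimensional face). -/
noncomputable def bdS : (Finset V →₀ K) →ₗ[K] (Finset V →₀ K) :=
  Finsupp.lsum K fun s => LinearMap.toSpanSingleton K (Finset V →₀ K) (bdFace K s)

/-- Chains supported on faces of a complex `Δ` having `k` vertices. -/
noncomputable def faceSpan (Δ : Set (Finset V)) (k : ℕ) : Submodule K (Finset V →₀ K) :=
  Submodule.span K {c | ∃ F ∈ Δ, F.card = k ∧ c = Finsupp.single F 1}

/-- Dimension of the `d`-th reduced simplicial homology of `Δ` over `K`. -/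
noncomputable def redHomRank (Δ : Set (Finset V)) (d : ℕ) : ℕ :=
  Module.finrank K ↥(faceSpan K Δ (d+1) ⊓ LinearMap.ker (bdS K)) -
    Module.finrank K
      ↥(Submodule.map (bdS K) (faceSpan K Δ (d+2)) ⊓
          (faceSpan K Δ (d+1) ⊓ LinearMap.ker (bdS K)))

/-- The flag complex of a graph: faces are the cliques. -/
def flagComplex (G : SimpleGraph V) : Set (Finset V) :=
  {F | ∀ i ∈ F, ∀ j ∈ F, i ≠ j → G.Adj i j}

/-- The flag complex of the induced subgraph of `G` on `W`. -/
def flagComplexOn (G : SimpleGraph V) (W : Finset V) : Set (Finset V) :=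
  {F | (F : Set V) ⊆ (W : Set V) ∧ ∀ i ∈ F, ∀ j ∈ F, i ≠ j → G.Adj i j}

/-- The induced subcomplex of `Δ` on a vertex subset `W`. -/
def restrictComplex (Δ : Set (Finset V)) (W : Finset V) : Set (Finset V) :=
  {F | F ∈ Δ ∧ F ⊆ W}

/-- The oriented `1`-chain `[a,b]` (so `[a,b] = -[b,a]`). -/
noncomputable def edgeChain (a b : V) : Finset V →₀ K :=
  if a < b then Finsupp.single {a, b} 1 else -Finsupp.single {a, b} 1

/-- The oriented `2`-chain `[x,y,z]`, antisymmetric under transpositions. -/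
noncomputable def triChain (x y z : V) : Finset V →₀ K :=
  if (x < y ∧ y < z) ∨ (y < z ∧ z < x) ∨ (z < x ∧ x < y)
  then Finsupp.single {x, y, z} 1
  else -Finsupp.single {x, y, z} 1

/-! ## Graded Betti numbers of monomial ideals via the Taylor complex -/

variable {n : ℕ}

/-- The multidegree lcm of the monomial generators indexed by `S`. -/
def mlcm {r : ℕ} (g : Fin r → (Fin n → ℕ)) (S : Finset (Fin r)) : Fin n → ℕ :=
  fun x => S.sup fun k => g k x

/-- The differential of the Taylor complex tensored with the residue field `K`. -/
noncomputable def bdT {r : ℕ} (g : Fin r → (Fin n → ℕ)) :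
    (Finset (Fin r) →₀ K) →ₗ[K] (Finset (Fin r) →₀ K) :=
  Finsupp.lsum K fun S => LinearMap.toSpanSingleton K (Finset (Fin r) →₀ K)
    (∑ k ∈ S, if mlcm g (S.erase k) = mlcm g S
      then ((-1 : K) ^ ((S.filter (fun j => j < k)).card)) • Finsupp.single (S.erase k) (1 : K)
      else 0)

/-- The degree-`j` strand of the Taylor complex in homological degree `p`. -/
noncomputable def strand {r : ℕ} (g : Fin r → (Fin n → ℕ)) (p j : ℕ) :
    Submodule K (Finset (Fin r) →₀ K) :=
  Submodule.span K
    {c | ∃ S : Finset (Fin r), S.card = p ∧ (∑ x, mlcm g S x) = j ∧ c = Finsupp.single S 1}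

/-- `dim_K Tor_p(S/I, K)_j`, computed from the Taylor complex on the monomial
generators `g` of `I`. -/
noncomputable def torRank {r : ℕ} (g : Fin r → (Fin n → ℕ)) (p j : ℕ) : ℕ :=
  Module.finrank K ↥(strand K g p j ⊓ LinearMap.ker (bdT K g)) -
    Module.finrank K
      ↥(Submodule.map (bdT K g) (strand K g (p+1) j) ⊓
          (strand K g p j ⊓ LinearMap.ker (bdT K g)))

/-- The graded Betti number `β_{i,j}(I)` of the monomial ideal `I` generated by
the monomials with exponent vectors `g`, i.e. `dim_K Tor_i(I, K)_j = dim_K Tor_{i+1}(S/I, K)_j`. -/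
noncomputable def betti {r : ℕ} (g : Fin r → (Fin n → ℕ)) (i j : ℕ) : ℕ :=
  torRank K g (i+1) j

/-- The monomial with exponent vector `a`. -/
noncomputable def mono (a : Fin n → ℕ) : MvPolynomial (Fin n) K :=
  MvPolynomial.monomial (Finsupp.equivFunOnFinite.symm a) 1

/-- `g` is a list of exponent vectors of monomials generating the ideal `I`. -/
def IsGenSet {r : ℕ} (g : Fin r → (Fin n → ℕ)) (I : Ideal (MvPolynomial (Fin n) K)) : Prop :=
  Ideal.span (Set.range fun k => mono K (g k)) = I

/-- The ideal (generated by the monomials with exponent vectors `g`) has a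
`d`-linear resolution. -/
def HasLinRes {r : ℕ} (g : Fin r → (Fin n → ℕ)) (d : ℕ) : Prop :=
  ∀ i j, betti K g i j ≠ 0 → j = i + d

/-- Castelnuovo–Mumford regularity of a monomial ideal, from its Betti numbers. -/
noncomputable def regT {r : ℕ} (g : Fin r → (Fin n → ℕ)) : ℕ :=
  sSup {d | ∃ i j, betti K g i j ≠ 0 ∧ j = i + d}

/-! ## Edge ideals -/

/-- The edge ideal of a simple graph. -/
noncomputable def edgeIdeal (G : SimpleGraph (Fin n)) : Ideal (MvPolynomial (Fin n) K) :=
  Ideal.span {m | ∃ i j : Fin n, G.Adj i j ∧ m = MvPolynomial.X i * MvPolynomial.X j}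

/-- The edge set of `G` as a finset. -/
noncomputable def edgeFins (G : SimpleGraph (Fin n)) : Finset (Sym2 (Fin n)) :=
  letI : Fintype ↥G.edgeSet := Fintype.ofFinite _
  G.edgeFinset

/-- The canonical monomial (exponent vector) generators of the edge ideal of `G`. -/
noncomputable def edgeGens (G : SimpleGraph (Fin n)) : Fin (edgeFins G).card → (Fin n → ℕ) :=
  fun k x => if x ∈ ((edgeFins G).equivFin.symm k : Sym2 (Fin n)) then 1 else 0

/-- The graded Betti numbers `β_{i,j}(I(G))` of the edge ideal of `G` over `K`. -/
noncomputable def gBetti (G : SimpleGraph (Fin n)) (i j : ℕ) : ℕ :=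
  betti K (edgeGens G) i j

/-- The projective dimension `pd(I(G))` of the edge ideal of `G` over `K`. -/
noncomputable def gPd (G : SimpleGraph (Fin n)) : ℕ :=
  sSup {i | ∃ j, gBetti K G i j ≠ 0}

/-- The Green–Lazarsfeld index of the edge ideal of `G` over `K`
(`⊤` iff the ideal has a linear resolution). -/
noncomputable def gIndex (G : SimpleGraph (Fin n)) : ℕ∞ :=
  sInf {N : ℕ∞ | ∃ i j : ℕ, N = (i : ℕ∞) ∧ i + 2 < j ∧ gBetti K G i j ≠ 0}

/-- The regularity of the edge ideal of `G` over `K`. -/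
noncomputable def gReg (G : SimpleGraph (Fin n)) : ℕ :=
  sSup {d | ∃ i j, gBetti K G i j ≠ 0 ∧ j = i + d}

/-- The edge ideal of `G` has a (2-)linear resolution over `K`. -/
def gLinRes (G : SimpleGraph (Fin n)) : Prop :=
  ∀ i j, gBetti K G i j ≠ 0 → j = i + 2

/-- The edge ideal of `G` has almost maximal finite index over `K`:
`index(I(G)) = pd(I(G)) - 1` (with the index finite). -/
def AMFI (G : SimpleGraph (Fin n)) : Prop :=
  gIndex K G + 1 = (gPd K G : ℕ∞)

/-! ## Graph-theoretic notions -/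

/-- `H` contains an induced (chordless) cycle of length `l`. -/
def HasInducedCycle {W : Type} (H : SimpleGraph W) (l : ℕ) : Prop :=
  ∃ f : ZMod l → W, Function.Injective f ∧
    ∀ i j : ZMod l, H.Adj (f i) (f j) ↔ (j = i + 1 ∨ i = j + 1)

/-- `H` is chordal: it has no induced cycle of length greater than `3`. -/
def Chordal {W : Type} (H : SimpleGraph W) : Prop :=
  ∀ l : ℕ, 3 < l → ¬ HasInducedCycle H l

end EP

/-!
A gap `ac`, `bd` of `G` is detected by the Taylor complex of `I(G)^s` in the multidegree
`u = s·(a + c) + b + d`, of total degree `2s + 2`. Since the only edges inside `{a, b, c, d}` are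
`ac` and `bd`, every generator of `I(G)^s` dividing `x^u` is divisible by `(x_a x_c)^s` or by
`x_b x_d`, and two generators of different kinds have lcm `x^u`. So the indicator `ε` of the first
kind is a `0`-cochain whose coboundary, read in multidegree `u`, vanishes on all boundaries of
`3`-element faces. A generator dividing `(x_a x_c)^s` and one dividing `(x_a x_c)^(s-1) x_b x_d`
form a cycle of multidegree `u` on which this coboundary is `±1`, so `β_{1,2s+2}(I(G)^s) ≠ 0` and
the resolution is not linear.
-/

namespace EP

open Finset MvPolynomial

section Taylor

variable {K : Type} [Field K] {n r : ℕ} (g : Fin r → Fin n → ℕ)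

lemma mlcm_singleton (k : Fin r) : mlcm g {k} = g k := by
  funext x; simp [mlcm]

lemma mlcm_pair (x y : Fin r) : mlcm g {x, y} = g x ⊔ g y := by
  funext v; simp [mlcm]

lemma le_mlcm {S : Finset (Fin r)} {k : Fin r} (hk : k ∈ S) : g k ≤ mlcm g S :=
  fun x => le_sup (f := fun k => g k x) hk

lemma bdT_single (S : Finset (Fin r)) :
    bdT K g (Finsupp.single S 1) =
      ∑ k ∈ S, if mlcm g (S.erase k) = mlcm g S
        then ((-1 : K) ^ #(S.filter (· < k))) • Finsupp.single (S.erase k) 1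
        else 0 := by
  rw [bdT, Finsupp.lsum_single, LinearMap.toSpanSingleton_apply, one_smul]

lemma exists_lt_lt_of_card_eq_three {α : Type} [LinearOrder α] (T : Finset α) (h : #T = 3) :
    ∃ p q t, p < q ∧ q < t ∧ T = {p, q, t} := by
  refine ⟨T.orderEmbOfFin h 0, T.orderEmbOfFin h 1, T.orderEmbOfFin h 2,
    (T.orderEmbOfFin h).strictMono (by decide), (T.orderEmbOfFin h).strictMono (by decide), ?_⟩
  ext x
  rw [← mem_coe, ← range_orderEmbOfFin T h]
  simp only [Set.mem_range, mem_insert, mem_singleton, Fin.exists_fin_succ, IsEmpty.exists_iff,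
    or_false, Fin.succ_zero_eq_one, Fin.succ_one_eq_two, eq_comm]

/-- The simplicial coboundary of the `0`-cochain `ε`, read on the Taylor chains of multidegree
`u` (and zero on all other chains). -/
noncomputable def coboundaryAt (u : Fin n → ℕ) (ε : Fin r → K) :
    (Finset (Fin r) →₀ K) →ₗ[K] K :=
  Finsupp.linearCombination K fun S =>
    if mlcm g S = u then ∑ k ∈ S, (-1 : K) ^ #(S.filter (· < k)) * ε k else 0

variable (u : Fin n → ℕ) (ε : Fin r → K)

lemma coboundaryAt_pair {x y : Fin r} (hxy : x < y) :
    coboundaryAt g u ε (Finsupp.single {x, y} 1) =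
      if mlcm g {x, y} = u then ε x - ε y else 0 := by
  rw [coboundaryAt, Finsupp.linearCombination_single, one_smul, sum_pair hxy.ne]
  simp [filter_insert, filter_singleton, hxy, hxy.not_gt, sub_eq_add_neg]

lemma coboundaryAt_bdT_of_card_eq_three
    (hsep : ∀ x y, g x ≤ u → g y ≤ u → ε x ≠ ε y → mlcm g {x, y} = u)
    {T : Finset (Fin r)} (hT : #T = 3) :
    coboundaryAt g u ε (bdT K g (Finsupp.single T 1)) = 0 := by
  -- by `hsep`, the lcm test on faces is void once `mlcm g T = u`; what is left is `δδε = 0`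
  have hface : ∀ x ∈ T, ∀ y ∈ T, x < y → ∀ c : K,
      (if mlcm g {x, y} = mlcm g T then c * coboundaryAt g u ε (Finsupp.single {x, y} 1)
        else 0) = if mlcm g T = u then c * (ε x - ε y) else 0 := by
    intro x hx y hy hxy c
    rw [coboundaryAt_pair g u ε hxy]
    by_cases hTu : mlcm g T = u
    · by_cases hxyu : mlcm g {x, y} = u
      · simp [hxyu, hTu]
      · have hε : ε x = ε y := by
          by_contra hne
          exact hxyu (hsep x y (hTu ▸ le_mlcm g hx) (hTu ▸ le_mlcm g hy) hne)
        simp [hε]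
    · grind
  obtain ⟨p, q, t, hpq, hqt, rfl⟩ := exists_lt_lt_of_card_eq_three T hT
  have hpt := hpq.trans hqt
  have erase_p : ({p, q, t} : Finset (Fin r)).erase p = {q, t} :=
    erase_insert (by simp [hpq.ne, hpt.ne])
  have erase_q : ({p, q, t} : Finset (Fin r)).erase q = {p, t} := by
    rw [erase_insert_of_ne hpq.ne, erase_insert (by simp [hqt.ne])]
  have erase_t : ({p, q, t} : Finset (Fin r)).erase t = {p, q} := by
    rw [erase_insert_of_ne hpt.ne, erase_insert_of_ne hqt.ne, erase_singleton]; rfl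
  rw [bdT_single, sum_insert (by simp [hpq.ne, hpt.ne]), sum_insert (by simp [hqt.ne]),
    sum_singleton]
  simp only [erase_p, erase_q, erase_t, map_add, apply_ite (coboundaryAt g u ε), map_smul,
    map_zero, smul_eq_mul]
  rw [hface q (by simp) t (by simp) hqt, hface p (by simp) t (by simp) hpt,
    hface p (by simp) q (by simp) hpq]
  split_ifs
  · simp [filter_insert, filter_singleton, hpq, hqt, hpt, hpq.not_gt, hqt.not_gt, hpt.not_gt,
      card_pair hpq.ne]
  · simp

lemma finrank_inf_lt_finrank {V : Type} [AddCommGroup V] [Module K V] [FiniteDimensional K V]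
    {B Z : Submodule K V} (φ : V →ₗ[K] K) (hB : B ≤ LinearMap.ker φ) {z : V} (hz : z ∈ Z)
    (hφz : φ z ≠ 0) : Module.finrank K ↥(B ⊓ Z) < Module.finrank K Z :=
  Submodule.finrank_lt_finrank_of_lt <| lt_of_le_of_ne inf_le_right fun h =>
    hφz (hB (h.ge hz).1)

theorem torRank_two_ne_zero
    (hsep : ∀ x y, g x ≤ u → g y ≤ u → ε x ≠ ε y → mlcm g {x, y} = u)
    {k₁ k₂ : Fin r} (hε : ε k₁ ≠ ε k₂) (hu : mlcm g {k₁, k₂} = u) (h₁ : g k₁ ≠ u)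
    (h₂ : g k₂ ≠ u) : torRank K g 2 (∑ x, u x) ≠ 0 := by
  have hk : k₁ ≠ k₂ := fun h => hε (h ▸ rfl)
  have hz : Finsupp.single {k₁, k₂} 1 ∈ strand K g 2 (∑ x, u x) :=
    Submodule.subset_span ⟨_, card_pair hk, by rw [hu], rfl⟩
  have hcycle : bdT K g (Finsupp.single {k₁, k₂} 1) = 0 := by
    rw [bdT_single, sum_pair hk, erase_insert (by simpa using hk), pair_comm,
      erase_insert (by simpa using hk.symm), mlcm_singleton, mlcm_singleton, pair_comm, hu]
    simp [h₁, h₂]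
  have hφz : coboundaryAt g u ε (Finsupp.single {k₁, k₂} 1) ≠ 0 := by
    rcases hk.lt_or_gt with h | h
    · rw [coboundaryAt_pair g u ε h, if_pos hu]
      exact sub_ne_zero.mpr hε
    · rw [pair_comm] at hu ⊢
      rw [coboundaryAt_pair g u ε h, if_pos hu]
      exact sub_ne_zero.mpr hε.symm
  have hB : (strand K g 3 (∑ x, u x)).map (bdT K g) ≤ LinearMap.ker (coboundaryAt g u ε) := by
    rw [strand, Submodule.map_span, Submodule.span_le]
    rintro _ ⟨_, ⟨T, hT, -, rfl⟩, rfl⟩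
    exact coboundaryAt_bdT_of_card_eq_three g u ε hsep hT
  have := finrank_inf_lt_finrank (coboundaryAt g u ε) hB
    (Submodule.mem_inf.mpr ⟨hz, LinearMap.mem_ker.mpr hcycle⟩) hφz
  exact Nat.sub_ne_zero_of_lt this

end Taylor

section EdgeIdeal

variable {K : Type} [Field K] {n : ℕ}

lemma mono_coe (w : Fin n →₀ ℕ) : mono K ⇑w = monomial w 1 := by
  rw [mono, Finsupp.equivFunOnFinite_symm_coe]

lemma mono_add (f h : Fin n → ℕ) : mono K (f + h) = mono K f * mono K h := by
  simp only [mono, monomial_mul, one_mul]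
  congr 2
  ext
  simp

lemma mono_nsmul (k : ℕ) (f : Fin n → ℕ) : mono K (k • f) = mono K f ^ k := by
  simp only [mono, monomial_pow, one_pow]
  congr 2
  ext
  simp

def edgeDeg (i j : Fin n) : Fin n → ℕ := Pi.single i 1 + Pi.single j 1

lemma mono_edgeDeg (i j : Fin n) : mono K (edgeDeg i j) = X i * X j := by
  rw [edgeDeg, mono_add, ← Finsupp.single_eq_pi_single, ← Finsupp.single_eq_pi_single,
    mono_coe, mono_coe, X, X]

lemma edgeDeg_mem_edgeIdeal {G : SimpleGraph (Fin n)} {i j : Fin n} (h : G.Adj i j) :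
    mono K (edgeDeg i j) ∈ edgeIdeal K G :=
  Ideal.subset_span ⟨i, j, h, mono_edgeDeg i j⟩

lemma edgeDeg_comm (i j : Fin n) : edgeDeg i j = edgeDeg j i := add_comm _ _

lemma sum_edgeDeg (i j : Fin n) : ∑ x, edgeDeg i j x = 2 := by
  simp [edgeDeg, sum_add_distrib]

open Pointwise in
lemma edgeIdeal_pow_le (G : SimpleGraph (Fin n)) (s : ℕ) :
    edgeIdeal K G ^ s ≤ Ideal.span ((fun w => monomial w (1 : K)) ''
      {w | ∃ p q : Fin s → Fin n, (∀ i, G.Adj (p i) (q i)) ∧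
        w = ∑ i, (Finsupp.single (p i) 1 + Finsupp.single (q i) 1)}) := by
  rw [edgeIdeal, Ideal.span, Submodule.span_pow]
  refine Submodule.span_mono ?_
  rintro x hx
  obtain ⟨f, rfl⟩ := Set.mem_pow.mp hx
  choose p q hpq hf using fun i => (f i).2
  refine ⟨_, ⟨p, q, hpq, rfl⟩, ?_⟩
  simp only [List.prod_ofFn, hf, monomial_sum_one, X, monomial_mul, one_mul]

theorem exists_sum_edgeDeg_le_of_mono_mem_pow {G : SimpleGraph (Fin n)} {s : ℕ}
    {m : Fin n → ℕ} (hm : mono K m ∈ edgeIdeal K G ^ s) :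
    ∃ p q : Fin s → Fin n, (∀ i, G.Adj (p i) (q i)) ∧ ∑ i, edgeDeg (p i) (q i) ≤ m := by
  have := edgeIdeal_pow_le (K := K) G s hm
  rw [mono, mem_ideal_span_monomial_image] at this
  obtain ⟨_, ⟨p, q, hpq, rfl⟩, hle⟩ := this (Finsupp.equivFunOnFinite.symm m) (by simp)
  refine ⟨p, q, hpq, fun x => ?_⟩
  simpa [edgeDeg, Finsupp.single_apply, Pi.single_apply, eq_comm] using hle x

variable {r : ℕ} {g : Fin r → Fin n → ℕ} {I : Ideal (MvPolynomial (Fin n) K)}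

lemma IsGenSet.mono_mem (hgen : IsGenSet K g I) (k : Fin r) : mono K (g k) ∈ I :=
  hgen ▸ Ideal.subset_span ⟨k, rfl⟩

lemma IsGenSet.exists_le (hgen : IsGenSet K g I) {m : Fin n → ℕ} (hm : mono K m ∈ I) :
    ∃ k, g k ≤ m := by
  rw [← hgen, show (fun k => mono K (g k)) =
      (fun w => monomial w (1 : K)) ∘ fun k => Finsupp.equivFunOnFinite.symm (g k) from rfl,
    Set.range_comp, mono, mem_ideal_span_monomial_image] at hm
  obtain ⟨_, ⟨k, rfl⟩, hle⟩ := hm (Finsupp.equivFunOnFinite.symm m) (by simp)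
  exact ⟨k, fun x => by simpa using hle x⟩

end EdgeIdeal

structure IsGap {V : Type} (G : SimpleGraph V) (a b c d : V) : Prop where
  adj_ac : G.Adj a c
  adj_bd : G.Adj b d
  not_adj_ab : ¬ G.Adj a b
  not_adj_ad : ¬ G.Adj a d
  not_adj_cb : ¬ G.Adj c b
  not_adj_cd : ¬ G.Adj c d

theorem exists_isGap_of_hasInducedCycle_compl {V : Type} {G : SimpleGraph V}
    (h : HasInducedCycle Gᶜ 4) : ∃ a b c d, IsGap G a b c d := by
  obtain ⟨f, hf, hcycle⟩ := h
  have hadj : ∀ i j, i ≠ j → (G.Adj (f i) (f j) ↔ ¬ (j = i + 1 ∨ i = j + 1)) := by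
    intro i j hij
    rw [← hcycle, SimpleGraph.compl_adj, not_and, not_not]
    exact ⟨fun h _ => h, fun h => h (hf.ne hij)⟩
  exact ⟨f 0, f 1, f 2, f 3, (hadj 0 2 (by decide)).2 (by decide),
    (hadj 1 3 (by decide)).2 (by decide), (hadj 0 1 (by decide)).not.2 (by decide),
    (hadj 0 3 (by decide)).not.2 (by decide), (hadj 2 1 (by decide)).not.2 (by decide),
    (hadj 2 3 (by decide)).not.2 (by decide)⟩

def gapDeg {n : ℕ} (s : ℕ) (a b c d : Fin n) : Fin n → ℕ := s • edgeDeg a c + edgeDeg b d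

namespace IsGap

variable {K : Type} [Field K] {n : ℕ} {G : SimpleGraph (Fin n)} {a b c d : Fin n}
  (hgap : IsGap G a b c d)
include hgap

lemma ne_ab : a ≠ b := fun h => hgap.not_adj_ad (h ▸ hgap.adj_bd)
lemma ne_ad : a ≠ d := fun h => hgap.not_adj_ab (h ▸ hgap.adj_bd.symm)
lemma ne_cb : c ≠ b := fun h => hgap.not_adj_cd (h ▸ hgap.adj_bd)
lemma ne_cd : c ≠ d := fun h => hgap.not_adj_cb (h ▸ hgap.adj_bd.symm)

lemma edgeDeg_ac_apply :
    edgeDeg a c a = 1 ∧ edgeDeg a c b = 0 ∧ edgeDeg a c c = 1 ∧ edgeDeg a c d = 0 := by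
  simp [edgeDeg, hgap.adj_ac.ne, hgap.adj_ac.ne', hgap.ne_ab.symm,
    hgap.ne_cb.symm, hgap.ne_ad.symm, hgap.ne_cd.symm]

lemma edgeDeg_bd_apply :
    edgeDeg b d a = 0 ∧ edgeDeg b d b = 1 ∧ edgeDeg b d c = 0 ∧ edgeDeg b d d = 1 := by
  simp [edgeDeg, hgap.adj_bd.ne, hgap.adj_bd.ne', hgap.ne_ab, hgap.ne_cb,
    hgap.ne_ad, hgap.ne_cd]

variable (s : ℕ)

lemma gapDeg_apply :
    gapDeg s a b c d a = s ∧ gapDeg s a b c d b = 1 ∧ gapDeg s a b c d c = s ∧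
      gapDeg s a b c d d = 1 := by
  simp [gapDeg, hgap.edgeDeg_ac_apply, hgap.edgeDeg_bd_apply]

lemma edge_cases {i j : Fin n} (hij : G.Adj i j) (hle : edgeDeg i j ≤ gapDeg s a b c d) :
    (i = a ∧ j = c ∨ i = c ∧ j = a) ∨ (i = b ∧ j = d ∨ i = d ∧ j = b) := by
  have hmem : ∀ v, 0 < edgeDeg i j v → v = a ∨ v = b ∨ v = c ∨ v = d := by
    intro v hv
    by_contra! h
    have hu : gapDeg s a b c d v = 0 := by
      simp [gapDeg, edgeDeg, h.1, h.2.1, h.2.2.1, h.2.2.2]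
    exact hv.ne' (Nat.le_zero.mp ((hle v).trans_eq hu))
  obtain ⟨-, -, hab, had, hcb, hcd⟩ := hgap
  rcases hmem i (by simp [edgeDeg]) with rfl | rfl | rfl | rfl <;>
    rcases hmem j (by simp [edgeDeg]) with rfl | rfl | rfl | rfl <;>
    simp_all [SimpleGraph.adj_comm]

theorem mem_pow_cases {m : Fin n → ℕ} (hm : mono K m ∈ edgeIdeal K G ^ s)
    (hmu : m ≤ gapDeg s a b c d) : (m a = s ∧ m c = s) ∨ (m b = 1 ∧ m d = 1) := by
  obtain ⟨p, q, hadj, hle⟩ := exists_sum_edgeDeg_le_of_mono_mem_pow hm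
  set e := fun i => edgeDeg (p i) (q i)
  have he : ∀ i, e i a = e i c ∧ e i b = e i d ∧ e i a + e i b = 1 := by
    intro i
    have hi := (single_le_sum (f := e) (fun _ _ _ => Nat.zero_le _) (mem_univ i)).trans
      (hle.trans hmu)
    have hac := hgap.edgeDeg_ac_apply
    have hbd := hgap.edgeDeg_bd_apply
    rcases hgap.edge_cases s (hadj i) hi with (⟨hp, hq⟩ | ⟨hp, hq⟩) | (⟨hp, hq⟩ | ⟨hp, hq⟩) <;>
      simp only [e, hp, hq, edgeDeg_comm c a, edgeDeg_comm d b] <;> omega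
  have hsa : ∑ i, e i a = ∑ i, e i c := sum_congr rfl fun i _ => (he i).1
  have hsb : ∑ i, e i b = ∑ i, e i d := sum_congr rfl fun i _ => (he i).2.1
  have hsab : ∑ i, e i a + ∑ i, e i b = s := by
    rw [← sum_add_distrib]; simp [(he _).2.2]
  obtain ⟨hua, hub, huc, hud⟩ := hgap.gapDeg_apply s
  rw [Pi.le_def] at hle hmu
  simp only [Finset.sum_apply] at hle
  have := hle a; have := hle b; have := hle c; have := hle d
  have := hmu a; have := hmu b; have := hmu c; have := hmu d
  omega

lemma sup_eq_gapDeg {v w : Fin n → ℕ} (hv : v ≤ gapDeg s a b c d) (hw : w ≤ gapDeg s a b c d)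
    (hvac : v a = s ∧ v c = s) (hwbd : w b = 1 ∧ w d = 1) : v ⊔ w = gapDeg s a b c d := by
  obtain ⟨hua, hub, huc, hud⟩ := hgap.gapDeg_apply s
  refine le_antisymm (sup_le hv hw) fun x => ?_
  rw [Pi.sup_apply]
  by_cases hxa : x = a
  · rw [hxa, hua, ← hvac.1]; exact le_sup_left
  by_cases hxb : x = b
  · rw [hxb, hub, ← hwbd.1]; exact le_sup_right
  by_cases hxc : x = c
  · rw [hxc, huc, ← hvac.2]; exact le_sup_left
  by_cases hxd : x = d
  · rw [hxd, hud, ← hwbd.2]; exact le_sup_right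
  simp [gapDeg, edgeDeg, hxa, hxb, hxc, hxd]

theorem betti_one_ne_zero (hs : 1 ≤ s) {r : ℕ} {g : Fin r → Fin n → ℕ}
    (hgen : IsGenSet K g (edgeIdeal K G ^ s)) : betti K g 1 (2 * s + 2) ≠ 0 := by
  obtain ⟨hua, hub, -, -⟩ := hgap.gapDeg_apply s
  let ε : Fin r → K := fun k => if g k a = s ∧ g k c = s then 1 else 0
  have hsep : ∀ x y, g x ≤ gapDeg s a b c d → g y ≤ gapDeg s a b c d → ε x ≠ ε y →
      mlcm g {x, y} = gapDeg s a b c d := by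
    intro x y hx hy hxy
    have hcases := fun k hk => hgap.mem_pow_cases s (hgen.mono_mem k) hk
    rw [mlcm_pair]
    by_cases hxA : g x a = s ∧ g x c = s <;> by_cases hyA : g y a = s ∧ g y c = s
    · simp [ε, hxA, hyA] at hxy
    · exact hgap.sup_eq_gapDeg s hx hy hxA ((hcases y hy).resolve_left hyA)
    · rw [sup_comm]; exact hgap.sup_eq_gapDeg s hy hx hyA ((hcases x hx).resolve_left hxA)
    · simp [ε, hxA, hyA] at hxy
  obtain ⟨k₁, hk₁⟩ := hgen.exists_le (m := s • edgeDeg a c) <| by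
    rw [mono_nsmul]; exact Ideal.pow_mem_pow (edgeDeg_mem_edgeIdeal hgap.adj_ac) s
  obtain ⟨k₂, hk₂⟩ := hgen.exists_le (m := (s - 1) • edgeDeg a c + edgeDeg b d) <| by
    rw [mono_add, mono_nsmul, ← Nat.sub_add_cancel hs, pow_succ]
    exact Ideal.mul_mem_mul (Ideal.pow_mem_pow (edgeDeg_mem_edgeIdeal hgap.adj_ac) _)
      (edgeDeg_mem_edgeIdeal hgap.adj_bd)
  have hk₁b : g k₁ b = 0 := by simpa [hgap.edgeDeg_ac_apply] using hk₁ b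
  have hk₂a : g k₂ a ≤ s - 1 := by
    simpa [hgap.edgeDeg_ac_apply, hgap.edgeDeg_bd_apply] using hk₂ a
  have hle₁ : g k₁ ≤ gapDeg s a b c d := hk₁.trans le_self_add
  have hle₂ : g k₂ ≤ gapDeg s a b c d :=
    hk₂.trans (add_le_add_left (nsmul_le_nsmul_left (fun _ => Nat.zero_le _) (Nat.sub_le s 1)) _)
  have hA₁ : g k₁ a = s ∧ g k₁ c = s :=
    (hgap.mem_pow_cases s (hgen.mono_mem k₁) hle₁).resolve_right fun h => by omega
  have hA₂ : ¬ (g k₂ a = s ∧ g k₂ c = s) := fun h => by omega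
  have hε : ε k₁ ≠ ε k₂ := by simp [ε, hA₁, hA₂]
  have hsum : ∑ x, gapDeg s a b c d x = 2 * s + 2 := by
    simp [gapDeg, sum_add_distrib, ← Finset.mul_sum, sum_edgeDeg, mul_comm]
  have := torRank_two_ne_zero g _ ε hsep hε (hsep _ _ hle₁ hle₂ hε)
    (fun h => by have := congrFun h b; omega) (fun h => by have := congrFun h a; omega)
  rwa [hsum] at this

end IsGap

end EP

/-- **Francisco–Hà–Van Tuyl.** If some power `I(G)^s`, `s ≥ 1`, of the edge
ideal has a linear resolution, then `G` is gap-free, i.e. the complement of `G` contains no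
induced `4`-cycle. -/
theorem statement15 (K : Type) [Field K] (n : ℕ) (G : SimpleGraph (Fin n))
    (s : ℕ) (hs : 1 ≤ s) (r : ℕ) (g : Fin r → (Fin n → ℕ))
    (hgen : EP.IsGenSet K g (EP.edgeIdeal K G ^ s))
    (hlin : EP.HasLinRes K g (2 * s)) :
    ¬ EP.HasInducedCycle Gᶜ 4 := by
  intro hcycle
  obtain ⟨a, b, c, d, hgap⟩ := EP.exists_isGap_of_hasInducedCycle_compl hcycle
  have := hlin 1 (2 * s + 2) (hgap.betti_one_ne_zero s hs hgen)
  omega
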